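/- Fix a parameter ρ > 0. Then for every channel coefficient h ∈ ℂ (including h = 0), the MVU filter achieves a strictly smaller zeroth-order symbol-estimate MSE than the MMSE filter: M_dc(f_MVU, h) < M_dc(f_MMSE, h), where f_MVU = x/‖x‖² and f_MMSE = ρ·x/(ρ‖x‖² + σw²). (Pointwise-in-h comparison underlying Proposition 8.) -/

import Mathlib

open MeasureTheory

/-- `φ(f) = fᴴ x = Σᵢ conj(fᵢ)·xᵢ`. -/
noncomputable def phi {B : ℕ} (x f : Fin B → ℂ) : ℂ :=
  ∑ i, (starRingEnd ℂ) (f i) * x i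

/-- Squared Euclidean norm `‖f‖² = Σᵢ |fᵢ|²`. -/
noncomputable def nsq {B : ℕ} (f : Fin B → ℂ) : ℝ :=
  ∑ i, Complex.normSq (f i)

/-- Zeroth-order symbol-estimate MSE of the ZF equalizer for channel `h`. -/
noncomputable def Mdc {B : ℕ} (σx2 σw2 : ℝ) (h : ℂ) (x f : Fin B → ℂ) : ℝ :=
  (σx2 * (Complex.normSq h * Complex.normSq (phi x f - 1) + σw2 * nsq f) + σw2) /
    (Complex.normSq h * Complex.normSq (phi x f) + σw2 * nsq f)

/-- The MVU channel-estimating filter `f_MVU = x / ‖x‖²`. -/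
noncomputable def fMVU {B : ℕ} (x : Fin B → ℂ) : Fin B → ℂ :=
  fun i => x i / (nsq x : ℂ)

/-- The MMSE channel-estimating filter `f_MMSE = ρ·x / (ρ‖x‖² + σw²)`. -/
noncomputable def fMMSE {B : ℕ} (σw2 ρ : ℝ) (x : Fin B → ℂ) : Fin B → ℂ :=
  fun i => (ρ : ℂ) * x i / ((ρ * nsq x + σw2 : ℝ) : ℂ)

/-!
Both filters are real multiples of `x`, so `M_dc` depends on them only through the real gain
`t = φ(f)`: `f_MVU` has gain `1` and `f_MMSE` has gain `ρ‖x‖² / (ρ‖x‖² + σw²) ∈ (0, 1)`.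
After clearing denominators, `M_dc(t) - M_dc(1)` has the sign of
`σx² |h|² (1 - t)² + σw² (1 - t²)`, which is positive for `0 < |t| < 1`.
-/

section

variable {B : ℕ} (x : Fin B → ℂ)

lemma nsq_pos {x : Fin B → ℂ} (hx : x ≠ 0) : 0 < nsq x := by
  obtain ⟨i, hi⟩ := Function.ne_iff.mp hx
  exact Finset.sum_pos' (fun j _ => Complex.normSq_nonneg (x j))
    ⟨i, Finset.mem_univ i, Complex.normSq_pos.mpr hi⟩

lemma phi_smul (c : ℂ) : phi x (fun i => c * x i) = (starRingEnd ℂ) c * nsq x := by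
  simp only [phi, nsq, Complex.ofReal_sum, Finset.mul_sum, map_mul,
    Complex.normSq_eq_conj_mul_self]
  exact Finset.sum_congr rfl fun i _ => mul_assoc _ _ _

lemma nsq_smul (c : ℂ) : nsq (fun i => c * x i) = Complex.normSq c * nsq x := by
  simp only [nsq, Complex.normSq_mul, Finset.mul_sum]

lemma fMVU_eq : fMVU x = fun i => ((nsq x)⁻¹ : ℝ) * x i := by
  funext i
  rw [fMVU, Complex.ofReal_inv, div_eq_inv_mul]

lemma fMMSE_eq (σw2 ρ : ℝ) :
    fMMSE σw2 ρ x = fun i => ((ρ / (ρ * nsq x + σw2) : ℝ) : ℂ) * x i := by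
  funext i
  rw [fMMSE, Complex.ofReal_div, mul_div_right_comm]

end

/-- The MSE `M_dc` of a filter along `x`, as a function of its gain `t = φ(f)`;
here `H = |h|²` and `a = σw² / ‖x‖²`. -/
noncomputable def mseOfGain (σx2 σw2 H a t : ℝ) : ℝ :=
  (σx2 * (H * (t - 1) ^ 2 + a * t ^ 2) + σw2) / (H * t ^ 2 + a * t ^ 2)

lemma Mdc_ofReal_smul {B : ℕ} (σx2 σw2 : ℝ) (h : ℂ) {x : Fin B → ℂ} (hx : nsq x ≠ 0)
    (c : ℝ) :
    Mdc σx2 σw2 h x (fun i => (c : ℂ) * x i) =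
      mseOfGain σx2 σw2 (Complex.normSq h) (σw2 / nsq x) (c * nsq x) := by
  have hphi : phi x (fun i => (c : ℂ) * x i) = ((c * nsq x : ℝ) : ℂ) := by
    rw [phi_smul, Complex.conj_ofReal, Complex.ofReal_mul]
  have hnsq : σw2 * nsq (fun i => (c : ℂ) * x i) = σw2 / nsq x * (c * nsq x) ^ 2 := by
    rw [nsq_smul, Complex.normSq_ofReal]
    field_simp
  rw [Mdc, mseOfGain, hphi, hnsq, ← Complex.ofReal_one, ← Complex.ofReal_sub,
    Complex.normSq_ofReal, Complex.normSq_ofReal, ← sq, ← sq]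

lemma mseOfGain_one_lt {σx2 σw2 H a t : ℝ} (hσx : 0 ≤ σx2) (hσw : 0 < σw2) (hH : 0 ≤ H)
    (ha : 0 < a) (ht0 : t ≠ 0) (ht1 : |t| < 1) :
    mseOfGain σx2 σw2 H a 1 < mseOfGain σx2 σw2 H a t := by
  have ht2 : 0 < t ^ 2 := by positivity
  have ht2' : t ^ 2 < 1 := by rwa [sq_lt_one_iff_abs_lt_one]
  have hD : 0 < H + a := by linarith
  have hgap : 0 < σx2 * H * (1 - t) ^ 2 + σw2 * (1 - t ^ 2) := by
    have := mul_pos hσw (sub_pos.mpr ht2')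
    positivity
  simp only [mseOfGain, sub_self, one_pow, mul_one]
  rw [← add_mul, div_lt_div_iff₀ hD (mul_pos hD ht2)]
  nlinarith [mul_pos hD hgap]

theorem mvu_pointwise_strictly_better_than_mmse_general
    (B : ℕ) (x : Fin B → ℂ) (hx : x ≠ 0)
    (σx2 σw2 : ℝ) (hσx : 0 < σx2) (hσw : 0 < σw2)
    (ρ : ℝ) (hρ : 0 < ρ) :
    ∀ h : ℂ, Mdc σx2 σw2 h x (fMVU x) < Mdc σx2 σw2 h x (fMMSE σw2 ρ x) := by
  intro h
  have hX := nsq_pos hx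
  have hd : 0 < ρ * nsq x + σw2 := by positivity
  have ht0 : 0 < ρ / (ρ * nsq x + σw2) * nsq x := by positivity
  have ht1 : ρ / (ρ * nsq x + σw2) * nsq x < 1 := by
    rw [div_mul_eq_mul_div, div_lt_one hd]
    linarith
  rw [fMVU_eq, fMMSE_eq, Mdc_ofReal_smul _ _ _ hX.ne', Mdc_ofReal_smul _ _ _ hX.ne',
    inv_mul_cancel₀ hX.ne']
  exact mseOfGain_one_lt hσx.le hσw (Complex.normSq_nonneg h) (by positivity) ht0.ne'
    (abs_lt.mpr ⟨by linarith, ht1⟩)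

/-- Pointwise-in-`h` comparison underlying Proposition 8: for every channel
coefficient `h` (including `h = 0`), the MVU filter achieves a strictly smaller
zeroth-order symbol-estimate MSE than the MMSE filter. -/
theorem mvu_pointwise_strictly_better_than_mmse
    (B : ℕ) (hB : 1 ≤ B) (x : Fin B → ℂ) (hx : x ≠ 0)
    (σx2 σw2 : ℝ) (hσx : 0 < σx2) (hσw : 0 < σw2)
    (ρ : ℝ) (hρ : 0 < ρ) :
    ∀ h : ℂ, Mdc σx2 σw2 h x (fMVU x) < Mdc σx2 σw2 h x (fMMSE σw2 ρ x) :=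
  mvu_pointwise_strictly_better_than_mmse_general B x hx σx2 σw2 hσx hσw ρ hρ
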